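/- arXiv:2401.00439 — 2 statements merged into one kernel-verified Lean document; each statement's English description precedes it below -/
import Mathlib

section
/- Let S be a 2×2 complex unitary symmetric matrix such that Id + S is invertible. Then the Cayley transform M := i(Id + S)⁻¹(Id − S) is a symmetric matrix with real entries (i.e. M = Mᵀ and all entries of M equal their complex conjugates). -/
open Matrix

/-!
Write `M = i A⁻¹ B` with `A = 1 + S`, `B = 1 - S`. For invertible `A`, the matrix `A⁻¹ B` is
symmetric as soon as `A Bᵀ = B Aᵀ`, and skew-Hermitian as soon as `A Bᴴ = -(B Aᴴ)`. Symmetry of `S`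
gives the first identity, since `1 + S` and `1 - S` commute; unitarity gives the second, both sides
being `S - Sᴴ` up to sign once `S Sᴴ = 1` is used. Hence `M` is symmetric and Hermitian, so
`conj (M i j) = M j i = M i j`.
-/

namespace Matrix

theorem IsHermitian.im_apply_eq_zero_of_isSymm {n : Type*} {M : Matrix n n ℂ}
    (hH : M.IsHermitian) (hS : M.IsSymm) (i j : n) : (M i j).im = 0 := by
  rw [← Complex.conj_eq_iff_im]
  exact (hH.apply j i).trans (hS.apply i j)

variable {n R : Type*} [Fintype n] [DecidableEq n] [CommRing R]

theorem transpose_nonsing_inv_mul_of_mul_transpose {A B : Matrix n n R} (hA : IsUnit A.det)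
    (h : A * Bᵀ = B * Aᵀ) : (A⁻¹ * B)ᵀ = A⁻¹ * B := by
  have hAT : IsUnit Aᵀ.det := by rwa [det_transpose]
  calc (A⁻¹ * B)ᵀ = A⁻¹ * (A * Bᵀ) * Aᵀ⁻¹ := by
        rw [← Matrix.mul_assoc, nonsing_inv_mul _ hA, Matrix.one_mul, transpose_mul,
          transpose_nonsing_inv]
    _ = A⁻¹ * B := by rw [h, Matrix.mul_assoc, mul_nonsing_inv_cancel_right _ _ hAT]

theorem conjTranspose_nonsing_inv_mul_of_mul_conjTranspose [StarRing R] {A B : Matrix n n R}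
    (hA : IsUnit A.det) (h : A * Bᴴ = -(B * Aᴴ)) : (A⁻¹ * B)ᴴ = -(A⁻¹ * B) := by
  have hAH : IsUnit Aᴴ.det := by rw [det_conjTranspose]; exact hA.star
  calc (A⁻¹ * B)ᴴ = A⁻¹ * (A * Bᴴ) * Aᴴ⁻¹ := by
        rw [← Matrix.mul_assoc, nonsing_inv_mul _ hA, Matrix.one_mul, conjTranspose_mul,
          conjTranspose_nonsing_inv]
    _ = -(A⁻¹ * B) := by
        rw [h, Matrix.mul_neg, Matrix.neg_mul, Matrix.mul_assoc,
          mul_nonsing_inv_cancel_right _ _ hAH]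

theorem isSymm_smul_cayley {S : Matrix n n R} (hS : S.IsSymm) (hdet : IsUnit (1 + S).det)
    (c : R) : (c • ((1 + S)⁻¹ * (1 - S))).IsSymm := by
  refine IsSymm.smul (transpose_nonsing_inv_mul_of_mul_transpose hdet ?_) c
  rw [transpose_sub, transpose_add, transpose_one, hS.eq]
  noncomm_ring

theorem isHermitian_I_smul_cayley {S : Matrix n n ℂ} (hU : S * Sᴴ = 1)
    (hdet : IsUnit (1 + S).det) : (Complex.I • ((1 + S)⁻¹ * (1 - S))).IsHermitian := by
  have hskew : ((1 + S)⁻¹ * (1 - S))ᴴ = -((1 + S)⁻¹ * (1 - S)) := by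
    refine conjTranspose_nonsing_inv_mul_of_mul_conjTranspose hdet ?_
    simp only [conjTranspose_sub, conjTranspose_add, conjTranspose_one, Matrix.mul_sub,
      Matrix.mul_add, Matrix.sub_mul, Matrix.add_mul, Matrix.mul_one, Matrix.one_mul, hU]
    abel
  rw [IsHermitian, conjTranspose_smul, hskew, Complex.star_def, Complex.conj_I, neg_smul_neg]

end Matrix

/-- The Cayley transform `M = i (Id + S)⁻¹ (Id − S)` of a 2×2 unitary symmetric
matrix `S` with `Id + S` invertible is symmetric with real entries. -/
theorem stmt_1 (S : Matrix (Fin 2) (Fin 2) ℂ)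
    (hU : S * Sᴴ = 1) (hSym : S = Sᵀ) (hdet : (1 + S).det ≠ 0)
    (M : Matrix (Fin 2) (Fin 2) ℂ)
    (hM : M = Complex.I • ((1 + S)⁻¹ * (1 - S))) :
    M = Mᵀ ∧ ∀ i j, (M i j).im = 0 := by
  have hMsymm : M.IsSymm := hM ▸ isSymm_smul_cayley hSym.symm hdet.isUnit Complex.I
  have hMherm : M.IsHermitian := hM ▸ isHermitian_I_smul_cayley hU hdet.isUnit
  exact ⟨hMsymm.eq.symm, hMherm.im_apply_eq_zero_of_isSymm hMsymm⟩
end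

section
/- Fix θ ∈ [0, π) and η ∈ [0, 2π). A real number ν > 0 is such that the 2×2 matrix [[sinθ·e^{−i√ν/2} − cosθ·e^{i√ν/2}e^{iη}, sinθ·e^{i√ν/2} − cosθ·e^{−i√ν/2}e^{iη}], [i√ν(cosθ·e^{−i√ν/2} − sinθ·e^{i√ν/2}e^{iη}), i√ν(−cosθ·e^{i√ν/2} + sinθ·e^{−i√ν/2}e^{iη})]] has nontrivial kernel if and only if sin(2θ)·cos η = cos√ν. -/
/-!
Writing `a = e^{ik/2}`, the determinant of the transmission matrix is a Laurent polynomial in `a`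
and `e^{iη}`; using `sin²θ + cos²θ = 1` it collapses to `2ik e^{iη} (cos k - sin 2θ cos η)`,
whose first factor never vanishes for `k ≠ 0`.
-/

open Matrix Complex

noncomputable def transmissionMatrix (θ η k : ℂ) : Matrix (Fin 2) (Fin 2) ℂ :=
  !![sin θ * exp (-(I * k) / 2) - cos θ * exp (I * k / 2) * exp (I * η),
      sin θ * exp (I * k / 2) - cos θ * exp (-(I * k) / 2) * exp (I * η);
    I * k * (cos θ * exp (-(I * k) / 2) - sin θ * exp (I * k / 2) * exp (I * η)),
      I * k * (-cos θ * exp (I * k / 2) + sin θ * exp (-(I * k) / 2) * exp (I * η))]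

theorem det_transmissionMatrix (θ η k : ℂ) :
    (transmissionMatrix θ η k).det =
      2 * I * k * exp (I * η) * (cos k - sin (2 * θ) * cos η) := by
  have half_inv : exp (I * k / 2) * exp (-(I * k) / 2) = 1 := by
    rw [← exp_add, show I * k / 2 + -(I * k) / 2 = 0 by ring, exp_zero]
  have cos_k : cos k = (exp (I * k / 2) ^ 2 + exp (-(I * k) / 2) ^ 2) / 2 := by
    rw [cos, ← exp_nat_mul, ← exp_nat_mul]
    ring_nf
  have cos_η : cos η = (exp (I * η) + exp (-(I * η))) / 2 := by
    rw [cos]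
    ring_nf
  have η_inv : exp (I * η) * exp (-(I * η)) = 1 := by
    rw [← exp_add, add_neg_cancel, exp_zero]
  rw [transmissionMatrix, det_fin_two_of, cos_k, cos_η, sin_two_mul]
  linear_combination
    (I * k * (exp (I * k / 2) ^ 2 + exp (-(I * k) / 2) ^ 2) * exp (I * η)) * sin_sq_add_cos_sq θ
      - (2 * I * k * sin θ * cos θ * (1 + exp (I * η) ^ 2)) * half_inv
      + (2 * I * k * sin θ * cos θ) * η_inv

theorem exists_mulVec_transmissionMatrix_eq_zero_iff {θ η k : ℂ} (hk : k ≠ 0) :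
    (∃ v : Fin 2 → ℂ, v ≠ 0 ∧ transmissionMatrix θ η k *ᵥ v = 0) ↔
      sin (2 * θ) * cos η = cos k := by
  have factor_ne_zero : 2 * I * k * exp (I * η) ≠ 0 := by simp [hk, exp_ne_zero]
  rw [exists_mulVec_eq_zero_iff, det_transmissionMatrix, mul_eq_zero, or_iff_right factor_ne_zero,
    sub_eq_zero, eq_comm]

theorem stmt_4_general (θ η ν : ℝ) (hν : 0 < ν) :
    (∃ v : Fin 2 → ℂ, v ≠ 0 ∧
      (!![(Real.sin θ : ℂ) * Complex.exp (-(Complex.I * (Real.sqrt ν : ℂ)) / 2)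
            - (Real.cos θ : ℂ) * Complex.exp (Complex.I * (Real.sqrt ν : ℂ) / 2)
              * Complex.exp (Complex.I * (η : ℂ)),
          (Real.sin θ : ℂ) * Complex.exp (Complex.I * (Real.sqrt ν : ℂ) / 2)
            - (Real.cos θ : ℂ) * Complex.exp (-(Complex.I * (Real.sqrt ν : ℂ)) / 2)
              * Complex.exp (Complex.I * (η : ℂ));
          Complex.I * (Real.sqrt ν : ℂ) *
            ((Real.cos θ : ℂ) * Complex.exp (-(Complex.I * (Real.sqrt ν : ℂ)) / 2)
              - (Real.sin θ : ℂ) * Complex.exp (Complex.I * (Real.sqrt ν : ℂ) / 2)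
                * Complex.exp (Complex.I * (η : ℂ))),
          Complex.I * (Real.sqrt ν : ℂ) *
            (-(Real.cos θ : ℂ) * Complex.exp (Complex.I * (Real.sqrt ν : ℂ) / 2)
              + (Real.sin θ : ℂ) * Complex.exp (-(Complex.I * (Real.sqrt ν : ℂ)) / 2)
                * Complex.exp (Complex.I * (η : ℂ)))]).mulVec v = 0) ↔
    Real.sin (2 * θ) * Real.cos η = Real.cos (Real.sqrt ν) := by
  have hk : (Real.sqrt ν : ℂ) ≠ 0 := by exact_mod_cast (Real.sqrt_pos.mpr hν).ne'
  rw [← Complex.ofReal_inj]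
  push_cast
  exact exists_mulVec_transmissionMatrix_eq_zero_iff hk

/-- For `θ ∈ [0, π)`, `η ∈ [0, 2π)` and `ν > 0`, the 2×2 matrix coming from the
weighted Kirchhoff transmission conditions has nontrivial kernel iff
`sin(2θ) cos η = cos √ν`. -/
theorem stmt_4 (θ η ν : ℝ) (hθ : θ ∈ Set.Ico 0 Real.pi)
    (hη : η ∈ Set.Ico 0 (2 * Real.pi)) (hν : 0 < ν) :
    (∃ v : Fin 2 → ℂ, v ≠ 0 ∧
      (!![(Real.sin θ : ℂ) * Complex.exp (-(Complex.I * (Real.sqrt ν : ℂ)) / 2)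
            - (Real.cos θ : ℂ) * Complex.exp (Complex.I * (Real.sqrt ν : ℂ) / 2)
              * Complex.exp (Complex.I * (η : ℂ)),
          (Real.sin θ : ℂ) * Complex.exp (Complex.I * (Real.sqrt ν : ℂ) / 2)
            - (Real.cos θ : ℂ) * Complex.exp (-(Complex.I * (Real.sqrt ν : ℂ)) / 2)
              * Complex.exp (Complex.I * (η : ℂ));
          Complex.I * (Real.sqrt ν : ℂ) *
            ((Real.cos θ : ℂ) * Complex.exp (-(Complex.I * (Real.sqrt ν : ℂ)) / 2)
              - (Real.sin θ : ℂ) * Complex.exp (Complex.I * (Real.sqrt ν : ℂ) / 2)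
                * Complex.exp (Complex.I * (η : ℂ))),
          Complex.I * (Real.sqrt ν : ℂ) *
            (-(Real.cos θ : ℂ) * Complex.exp (Complex.I * (Real.sqrt ν : ℂ) / 2)
              + (Real.sin θ : ℂ) * Complex.exp (-(Complex.I * (Real.sqrt ν : ℂ)) / 2)
                * Complex.exp (Complex.I * (η : ℂ)))]).mulVec v = 0) ↔
    Real.sin (2 * θ) * Real.cos η = Real.cos (Real.sqrt ν) :=
  stmt_4_general θ η ν hν
end
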